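/- Let H be a Noetherian group, and let G be a group with a surjective group homomorphism φ : G → H whose kernel is contained in the center of G (i.e., G is a central extension of H). If the Schur multiplier H₂(H, ℤ) of H is a finitely generated abelian group, then the commutator subgroup [G, G] is Noetherian. -/

import Mathlib

/-!
Lift a free presentation `π : F → H` (`F` free on `H`, `R = ker π`) through `φ` to
`ψ : F → G`. Since `ker φ` is central, `ψ` kills `⁅F, R⁆`, maps `[F, F]` onto `[G, G]`, and
hence maps the Hopf quotient `(R ⊓ [F, F]) / ⁅F, R⁆` onto `ker φ ⊓ [G, G]`. That subgroup is
therefore finitely generated and central, hence abelian and Noetherian, and `[G, G]` is an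
extension of it by the subgroup `φ [G, G]` of the Noetherian group `H`.
-/

/-- A group is *Noetherian* if every subgroup is finitely generated. -/
def IsNoetherianGroup (G : Type*) [Group G] : Prop := ∀ K : Subgroup G, K.FG

/-- The *Schur multiplier* `H₂(G, ℤ)` of a group `G`, via Hopf's formula:
`H₂(G, ℤ) ≅ (R ⊓ [F, F]) / ⁅F, R⁆`, where `F` is the free group on the underlying set of `G`
and `R` is the kernel of the canonical projection `F → G`. -/
def SchurMultiplier (G : Type*) [Group G] :=
  ((FreeGroup.lift (id : G → G)).ker ⊓ commutator (FreeGroup G)).map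
    (QuotientGroup.mk' ⁅(⊤ : Subgroup (FreeGroup G)), (FreeGroup.lift (id : G → G)).ker⁆)

open Subgroup

namespace Subgroup

variable {G G' : Type*} [Group G] [Group G']

theorem FG.map {K : Subgroup G} (hK : K.FG) (f : G →* G') : (K.map f).FG := by
  classical
  obtain ⟨S, rfl⟩ := hK
  exact ⟨S.image f, by rw [Finset.coe_image, MonoidHom.map_closure]⟩

theorem FG.of_map_injective {K : Subgroup G} {f : G →* G'} (hf : Function.Injective f)
    (hK : (K.map f).FG) : K.FG := by
  rw [fg_iff_submonoid_fg] at hK ⊢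
  exact hK.map_injective f hf

theorem fg_of_fg_map_of_fg_inf_ker (f : G →* G') {K : Subgroup G} (hmap : (K.map f).FG)
    (hker : (K ⊓ f.ker).FG) : K.FG := by
  classical
  obtain ⟨T', hT'⟩ := hmap
  obtain ⟨T, hTK, rfl⟩ : ∃ T : Finset G, ↑T ⊆ (K : Set G) ∧ T.image f = T' :=
    Finset.subset_set_image_iff.mp fun t ht ↦ by
      simpa only [← coe_map, ← hT'] using subset_closure ht
  have hTK' : closure (T : Set G) ≤ K := (closure_le K).mpr hTK
  suffices K = closure T ⊔ (K ⊓ f.ker) from this ▸ FG.sup ⟨T, rfl⟩ hker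
  refine le_antisymm (fun k hk ↦ ?_) (sup_le hTK' inf_le_left)
  obtain ⟨c, hc, hck⟩ : f k ∈ (closure (T : Set G)).map f := by
    rw [MonoidHom.map_closure, ← Finset.coe_image, hT']
    exact mem_map_of_mem f hk
  have hker : c⁻¹ * k ∈ K ⊓ f.ker :=
    ⟨K.mul_mem (K.inv_mem (hTK' hc)) hk, (f.eq_iff).mp hck.symm⟩
  exact mul_inv_cancel_left c k ▸ mul_mem_sup hc hker

theorem isNoetherianGroup_iff {K : Subgroup G} : IsNoetherianGroup K ↔ ∀ L ≤ K, L.FG := by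
  refine ⟨fun hK L hLK ↦ ?_, fun hK L ↦ ?_⟩
  · rw [← map_subgroupOf_eq_of_le hLK]
    exact (hK _).map K.subtype
  · exact .of_map_injective K.subtype_injective (hK _ (map_subtype_le L))

end Subgroup

open scoped IsMulCommutative in
theorem isNoetherianGroup_of_isMulCommutative (A : Type*) [Group A] [IsMulCommutative A]
    [Group.FG A] : IsNoetherianGroup A := by
  have : Module.Finite ℤ (Additive A) := Module.Finite.iff_addGroup_fg.mpr inferInstance
  intro K
  rw [fg_iff_add_fg, ← AddSubgroup.toIntSubmodule_toAddSubgroup K.toAddSubgroup,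
    ← Submodule.fg_iff_addSubgroup_fg]
  exact IsNoetherian.noetherian _

theorem Subgroup.FG.of_le_of_le_center {G : Type*} [Group G] {K L : Subgroup G} (hK : K.FG)
    (hKc : K ≤ center G) (hLK : L ≤ K) : L.FG := by
  have : IsMulCommutative K :=
    le_centralizer_iff_isMulCommutative.mp (hKc.trans (center_le_centralizer _))
  have : Group.FG K := (Group.fg_iff_subgroup_fg K).mpr hK
  exact isNoetherianGroup_iff.mp (isNoetherianGroup_of_isMulCommutative K) L hLK

section CentralExtension

variable {F G H : Type*} [Group F] [Group G] [Group H]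

open scoped commutatorElement in
theorem commutatorElement_mul_mul_of_mem_center (a b : G) {z w : G} (hz : z ∈ center G)
    (hw : w ∈ center G) : ⁅a * z, b * w⁆ = ⁅a, b⁆ := by
  calc ⁅a * z, b * w⁆ = a * (z * (b * w)) * z⁻¹ * a⁻¹ * w⁻¹ * b⁻¹ := by group
    _ = a * b * (w * a⁻¹) * w⁻¹ * b⁻¹ := by rw [← mem_center_iff.mp hz]; group
    _ = ⁅a, b⁆ := by rw [← mem_center_iff.mp hw]; group

variable {φ : G →* H} {π : F →* H} {ψ : F →* G}

theorem map_commutator_eq_commutator_of_ker_le_center (hker : φ.ker ≤ center G)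
    (hψ : Function.Surjective (φ.comp ψ)) : (commutator F).map ψ = commutator G := by
  refine le_antisymm (map_commutator_eq F ψ ▸ commutator_mono le_top le_top) ?_
  have hlift : ∀ g, ∃ x, ∃ z ∈ center G, g = ψ x * z := fun g ↦ by
    obtain ⟨x, hx⟩ := hψ (φ g)
    exact ⟨x, _, hker ((φ.eq_iff).mp hx.symm), (mul_inv_cancel_left _ _).symm⟩
  rw [_root_.commutator_def, commutator_le]
  intro g₁ _ g₂ _
  obtain ⟨x₁, z₁, hz₁, rfl⟩ := hlift g₁
  obtain ⟨x₂, z₂, hz₂, rfl⟩ := hlift g₂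
  rw [commutatorElement_mul_mul_of_mem_center _ _ hz₁ hz₂, ← map_commutatorElement]
  exact mem_map_of_mem ψ (commutator_mem_commutator (mem_top x₁) (mem_top x₂))

theorem commutator_top_ker_le_ker (hker : φ.ker ≤ center G) (hcomp : φ.comp ψ = π) :
    ⁅(⊤ : Subgroup F), π.ker⁆ ≤ ψ.ker := by
  have hcentral : π.ker.map ψ ≤ center G := by
    rw [← hcomp, ← MonoidHom.comap_ker]
    exact (map_comap_le ψ φ.ker).trans hker
  rw [← Subgroup.map_eq_bot_iff, map_commutator, ← le_bot_iff,
    ← commutator_top_left_eq_bot_iff_le_center.mpr hcentral]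
  exact commutator_mono le_top le_rfl

theorem map_ker_inf_commutator_eq (hker : φ.ker ≤ center G) (hcomp : φ.comp ψ = π)
    (hπ : Function.Surjective π) :
    (π.ker ⊓ commutator F).map ψ = φ.ker ⊓ commutator G := by
  have hcomm := map_commutator_eq_commutator_of_ker_le_center hker (hcomp ▸ hπ)
  rw [← hcomp, ← MonoidHom.comap_ker, ← hcomm]
  refine le_antisymm ((map_inf_le _ _ ψ).trans (inf_le_inf_right _ (map_comap_le ψ φ.ker))) ?_
  rintro _ ⟨hy, x, hx, rfl⟩
  exact mem_map_of_mem ψ ⟨hy, hx⟩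

theorem fg_ker_inf_commutator_of_fg_schurMultiplier (hsurj : Function.Surjective φ)
    (hker : φ.ker ≤ center G) (hM : Group.FG (SchurMultiplier H)) :
    (φ.ker ⊓ commutator G).FG := by
  set π : FreeGroup H →* H := FreeGroup.lift id
  set ψ : FreeGroup H →* G := FreeGroup.lift (Function.surjInv hsurj)
  have hcomp : φ.comp ψ = π :=
    FreeGroup.ext_hom _ _ fun h ↦ by simp [ψ, π, Function.surjInv_eq hsurj]
  have hπ : Function.Surjective π := fun h ↦ ⟨FreeGroup.of h, FreeGroup.lift_apply_of⟩
  let ψbar := QuotientGroup.lift _ ψ (commutator_top_ker_le_ker hker hcomp)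
  have hmap : (SchurMultiplier H).map ψbar = (π.ker ⊓ commutator (FreeGroup H)).map ψ := by
    rw [SchurMultiplier, map_map]
    rfl
  rw [← map_ker_inf_commutator_eq hker hcomp hπ, ← hmap]
  exact ((Group.fg_iff_subgroup_fg _).mp hM).map ψbar

end CentralExtension

/-- Let `H` be a Noetherian group and `G` a central extension of `H`. If the Schur multiplier
of `H` is a finitely generated (abelian) group, then `[G, G]` is Noetherian. -/
theorem commutator_noetherian_of_central_extension_of_fg_schurMultiplier
    {G H : Type*} [Group G] [Group H] (φ : G →* H)
    (hsurj : Function.Surjective φ) (hker : φ.ker ≤ Subgroup.center G)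
    (hH : IsNoetherianGroup H) (hM : Group.FG ↥(SchurMultiplier H)) :
    IsNoetherianGroup ↥(commutator G) := by
  have hfg := fg_ker_inf_commutator_of_fg_schurMultiplier hsurj hker hM
  refine isNoetherianGroup_iff.mpr fun L hL ↦ fg_of_fg_map_of_fg_inf_ker φ (hH _) ?_
  exact hfg.of_le_of_le_center (inf_le_left.trans hker) (le_inf inf_le_right (inf_le_left.trans hL))
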